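/- Let q be a prime power, F_q a finite field with q elements, and n ≥ 1. The symmetric group S_n acts on the quotient F_q-algebra F_q[X_1,...,X_n]/(X_1^q − X_1, ..., X_n^q − X_n) by permuting the variables, and the subspace of elements fixed by every permutation is an F_q-vector space of dimension C(n+q-1, n). -/

import Mathlib

/-!
Evaluation at all points of `F_q^n` identifies `F_q[X_1,...,X_n] / (X_i^q - X_i)` with the algebra
of all functions `F_q^n → F_q`: the relations `X^q = X` bring every class down to a polynomial of
degree `< q` in each variable, and such a polynomial vanishing on all of `F_q^n` is zero. Under
this identification renaming the variables by `σ` becomes precomposition with `σ`, so the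
invariants are the functions constant on the `S_n`-orbits of `F_q^n`. These orbits are the
multisets of size `n` on `F_q`, of which there are `C(n + q - 1, n)`.
-/

open MvPolynomial

theorem exists_le_pred_pow_eq_of_pow_eq_self {M : Type*} [Monoid M] {x : M} {q : ℕ}
    (hq : 1 < q) (hx : x ^ q = x) (k : ℕ) : ∃ e ≤ q - 1, x ^ k = x ^ e := by
  induction k using Nat.strong_induction_on with
  | _ k ih =>
    by_cases hk : k ≤ q - 1
    · exact ⟨k, hk, rfl⟩
    obtain ⟨e, he, hke⟩ := ih (k - q + 1) (by omega)
    refine ⟨e, he, ?_⟩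
    calc x ^ k = x ^ (k - q) * x ^ q := by rw [← pow_add, Nat.sub_add_cancel (by omega)]
      _ = x ^ (k - q + 1) := by rw [hx, pow_succ]
      _ = x ^ e := hke

theorem exists_perm_comp_eq_of_map_univ_eq {α β : Type*} [Fintype α] [DecidableEq β]
    {a b : α → β} (h : Finset.univ.val.map a = Finset.univ.val.map b) :
    ∃ σ : Equiv.Perm α, a ∘ σ = b := by
  have card_fiber (f : α → β) (c : β) :
      Fintype.card {i // f i = c} = (Finset.univ.val.map f).count c := by
    rw [Multiset.count_map, Fintype.card_subtype, Finset.card_def, Finset.filter_val]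
    exact congrArg Multiset.card (Multiset.filter_congr fun i _ => eq_comm)
  have hfiber (c : β) : {i // b i = c} ≃ {i // a i = c} :=
    Fintype.equivOfCardEq (by rw [card_fiber, card_fiber, h])
  exact ⟨Equiv.ofFiberEquiv hfiber, funext fun i => Equiv.ofFiberEquiv_map hfiber i⟩

namespace Sym

variable {α : Type*} {n : ℕ}

def ofFn (a : Fin n → α) : Sym α n :=
  ⟨List.ofFn a, by simp⟩

theorem ofFn_comp_perm (a : Fin n → α) (σ : Equiv.Perm (Fin n)) : ofFn (a ∘ σ) = ofFn a :=
  Subtype.ext <| Quotient.sound <| σ.ofFn_comp_perm a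

theorem ofFn_eq_ofFn_iff [DecidableEq α] {a b : Fin n → α} :
    ofFn a = ofFn b ↔ ∃ σ : Equiv.Perm (Fin n), a ∘ σ = b := by
  refine ⟨fun h => exists_perm_comp_eq_of_map_univ_eq ?_, ?_⟩
  · rw [Fin.univ_val_map, Fin.univ_val_map]
    exact congrArg Subtype.val h
  · rintro ⟨σ, rfl⟩
    exact (ofFn_comp_perm a σ).symm

theorem ofFn_surjective : Function.Surjective (ofFn : (Fin n → α) → Sym α n) := by
  rintro ⟨m, rfl⟩
  have hl : m.toList.length = Multiset.card m := Multiset.length_toList m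
  refine ⟨fun i => m.toList.get (i.cast hl.symm), Subtype.ext ?_⟩
  change ((List.ofFn fun i => _ : List α) : Multiset α) = m
  rw [← List.ofFn_congr hl, List.ofFn_get, Multiset.coe_toList]

end Sym

section SymmetricFunctions

variable (K α ι : Type*)

def symmetricFunctions [CommSemiring K] : Submodule K ((ι → α) → K) where
  carrier := {f | ∀ (σ : Equiv.Perm ι) (a : ι → α), f (a ∘ σ) = f a}
  add_mem' hf hg σ a := by simp [hf σ a, hg σ a]
  zero_mem' _ _ := rfl
  smul_mem' c f hf σ a := by simp [hf σ a]

variable {K α} {n : ℕ}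

theorem symmetricFunctions_eq_range_funLeft [CommSemiring K] [DecidableEq α] :
    symmetricFunctions K α (Fin n) = LinearMap.range (LinearMap.funLeft K K Sym.ofFn) := by
  ext f
  constructor
  · intro hf
    have hfactor : f.FactorsThrough Sym.ofFn := fun a b hab => by
      obtain ⟨σ, rfl⟩ := Sym.ofFn_eq_ofFn_iff.mp hab
      exact (hf σ a).symm
    exact ⟨Function.extend Sym.ofFn f 0, funext (hfactor.extend_apply 0)⟩
  · rintro ⟨g, rfl⟩ σ a
    simp [LinearMap.funLeft_apply, Sym.ofFn_comp_perm]

theorem finrank_symmetricFunctions [Field K] [Fintype α] [DecidableEq α] :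
    Module.finrank K (symmetricFunctions K α (Fin n)) = (n + Fintype.card α - 1).choose n := by
  rw [symmetricFunctions_eq_range_funLeft, LinearMap.finrank_range_of_inj
      (LinearMap.funLeft_injective_of_surjective _ _ _ Sym.ofFn_surjective),
    Module.finrank_fintype_fun_eq_card, Sym.card_sym_eq_choose, add_comm]

end SymmetricFunctions

-- Mathlib's `eq_zero_of_eval_eq_zero` needs the variables and the field in one universe.
universe u

namespace MvPolynomial

theorem monomial_eq_C_mul_prod_X_pow {σ R : Type*} [Fintype σ] [CommSemiring R] (d : σ →₀ ℕ)
    (c : R) : monomial d c = C c * ∏ i, X i ^ d i := by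
  rw [monomial_eq, Finsupp.prod_fintype _ _ (fun _ => pow_zero _)]

variable (σ K : Type u) [Field K]

noncomputable def evalₐ : MvPolynomial σ K →ₐ[K] (σ → K) → K :=
  AlgHom.pi fun a => aeval a

@[simp]
theorem evalₐ_apply (P : MvPolynomial σ K) (a : σ → K) : evalₐ σ K P a = eval a P := rfl

variable [Fintype K]

noncomputable def fieldIdeal : Ideal (MvPolynomial σ K) :=
  Ideal.span (Set.range fun i : σ => X i ^ Fintype.card K - X i)

variable {σ K}

theorem fieldIdeal_le_ker_evalₐ : fieldIdeal σ K ≤ RingHom.ker (evalₐ σ K) := by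
  rw [fieldIdeal, Ideal.span_le]
  rintro _ ⟨i, rfl⟩
  ext a
  simp [FiniteField.pow_card]

theorem exists_mem_restrictDegree_mk_eq [Fintype σ] (P : MvPolynomial σ K) :
    ∃ Q ∈ restrictDegree σ K (Fintype.card K - 1),
      Ideal.Quotient.mk (fieldIdeal σ K) Q = Ideal.Quotient.mk _ P := by
  let π := (Ideal.Quotient.mkₐ K (fieldIdeal σ K)).toLinearMap
  suffices π P ∈ (restrictDegree σ K (Fintype.card K - 1)).map π by
    simpa [π] using this
  rw [← support_sum_monomial_coeff P, map_sum]
  refine Submodule.sum_mem _ fun d _ => ?_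
  have hX (i : σ) : Ideal.Quotient.mk (fieldIdeal σ K) (X i) ^ Fintype.card K =
      Ideal.Quotient.mk _ (X i) := by
    rw [← map_pow, Ideal.Quotient.eq]
    exact Ideal.subset_span ⟨i, rfl⟩
  choose e he hde using fun i =>
    exists_le_pred_pow_eq_of_pow_eq_self Fintype.one_lt_card (hX i) (d i)
  refine ⟨monomial (Finsupp.equivFunOnFinite.symm e) (P.coeff d), ?_, ?_⟩
  · intro s hs i
    rw [Finset.mem_singleton.mp (support_monomial_subset hs)]
    exact he i
  · simp only [π, AlgHom.toLinearMap_apply, Ideal.Quotient.mkₐ_eq_mk,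
      monomial_eq_C_mul_prod_X_pow, map_mul, map_prod, map_pow, hde,
      Finsupp.coe_equivFunOnFinite_symm]

theorem ker_evalₐ [Fintype σ] : RingHom.ker (evalₐ σ K) = fieldIdeal σ K := by
  refine le_antisymm (fun P hP => ?_) fieldIdeal_le_ker_evalₐ
  obtain ⟨Q, hQ, hQP⟩ := exists_mem_restrictDegree_mk_eq P
  have hQ0 : Q = 0 := by
    have hQker : Q ∈ RingHom.ker (evalₐ σ K) := by
      have := fieldIdeal_le_ker_evalₐ (Ideal.Quotient.eq.mp hQP)
      simpa [hP] using add_mem this hP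
    refine eq_zero_of_eval_eq_zero _ _ Q (fun a => ?_) hQ
    simpa using congrFun (RingHom.mem_ker.mp hQker) a
  rw [← Ideal.Quotient.eq_zero_iff_mem, ← hQP, hQ0, map_zero]

theorem evalₐ_surjective [Fintype σ] : Function.Surjective (evalₐ σ K) := by
  intro f
  obtain ⟨P, -, hP⟩ := Submodule.mem_map.mp
    ((map_restrict_dom_evalₗ K σ).symm ▸ Submodule.mem_top : f ∈ _)
  exact ⟨P, hP⟩

variable (σ K) in
noncomputable def quotientFieldIdealAlgEquiv [Fintype σ] :
    (MvPolynomial σ K ⧸ fieldIdeal σ K) ≃ₐ[K] ((σ → K) → K) :=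
  (Ideal.quotientEquivAlgOfEq K ker_evalₐ.symm).trans
    (Ideal.quotientKerAlgEquivOfSurjective evalₐ_surjective)

@[simp]
theorem quotientFieldIdealAlgEquiv_mk [Fintype σ] (P : MvPolynomial σ K) (a : σ → K) :
    quotientFieldIdealAlgEquiv σ K (Ideal.Quotient.mk _ P) a = eval a P := rfl

variable [Fintype σ]

theorem quotientFieldIdealAlgEquiv_mk_rename (τ : Equiv.Perm σ) (P : MvPolynomial σ K)
    (a : σ → K) :
    quotientFieldIdealAlgEquiv σ K (Ideal.Quotient.mk _ (rename τ P)) a =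
      quotientFieldIdealAlgEquiv σ K (Ideal.Quotient.mk _ P) (a ∘ τ) := by
  simp [eval_rename]

variable (σ K) in
noncomputable def permInvariants : Submodule K (MvPolynomial σ K ⧸ fieldIdeal σ K) :=
  (symmetricFunctions K K σ).comap (quotientFieldIdealAlgEquiv σ K).toLinearMap

theorem mem_permInvariants_iff (x : MvPolynomial σ K ⧸ fieldIdeal σ K) :
    x ∈ permInvariants σ K ↔ ∀ (τ : Equiv.Perm σ) (P : MvPolynomial σ K),
      Ideal.Quotient.mk _ P = x → Ideal.Quotient.mk _ (rename τ P) = x := by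
  constructor
  · rintro h τ P rfl
    apply (quotientFieldIdealAlgEquiv σ K).injective
    funext a
    rw [quotientFieldIdealAlgEquiv_mk_rename]
    exact h τ a
  · intro h τ a
    obtain ⟨P, rfl⟩ := Ideal.Quotient.mk_surjective x
    change quotientFieldIdealAlgEquiv σ K _ (a ∘ τ) = quotientFieldIdealAlgEquiv σ K _ a
    rw [← quotientFieldIdealAlgEquiv_mk_rename, h τ P rfl]

end MvPolynomial

theorem MvPolynomial.finrank_permInvariants {K : Type} [Field K] [Fintype K] {n : ℕ} :
    Module.finrank K (permInvariants (Fin n) K) = (n + Fintype.card K - 1).choose n := by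
  classical
  rw [permInvariants, ← AlgEquiv.toLinearEquiv_toLinearMap,
    Submodule.comap_equiv_eq_map_symm, LinearEquiv.finrank_map_eq, finrank_symmetricFunctions]

theorem stmt9_general (q n : ℕ)
    (F : Type) [Field F] [Fintype F] (hF : Fintype.card F = q) :
    ∃ S : Submodule F
      (MvPolynomial (Fin n) F ⧸
        Ideal.span (Set.range fun i : Fin n =>
          (X i ^ q - X i : MvPolynomial (Fin n) F))),
      (∀ x, x ∈ S ↔ ∀ (σ : Equiv.Perm (Fin n)) (P : MvPolynomial (Fin n) F),
        Ideal.Quotient.mk _ P = x → Ideal.Quotient.mk _ (rename σ P) = x) ∧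
      Module.finrank F S = (n + q - 1).choose n := by
  subst hF
  exact ⟨permInvariants (Fin n) F, mem_permInvariants_iff, finrank_permInvariants⟩

/-- The symmetric group acts on `F_q[X_1,...,X_n] / (X_i ^ q - X_i)` by permuting variables,
and the subspace of elements fixed by every permutation has dimension `(n + q - 1).choose n`
over `F_q`. An element `x` of the quotient is fixed exactly when for every representative `P`
of `x` and every permutation `σ`, the class of `rename σ P` is again `x`. -/
theorem stmt9 (q n : ℕ) (hq : IsPrimePow q) (hn : 1 ≤ n)
    (F : Type) [Field F] [Fintype F] (hF : Fintype.card F = q) :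
    ∃ S : Submodule F
      (MvPolynomial (Fin n) F ⧸
        Ideal.span (Set.range fun i : Fin n =>
          (X i ^ q - X i : MvPolynomial (Fin n) F))),
      (∀ x, x ∈ S ↔ ∀ (σ : Equiv.Perm (Fin n)) (P : MvPolynomial (Fin n) F),
        Ideal.Quotient.mk _ P = x → Ideal.Quotient.mk _ (rename σ P) = x) ∧
      Module.finrank F S = (n + q - 1).choose n :=
  stmt9_general q n F hF
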